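/- The insertion map o_i : A^{pb}_n ⊗ A^{pb}_m → A^{pb}_{n+m-1} defined on generators by o_i(t_{pq} ⊗ 1) = t_{φ(p)φ(q)} for p, q ≠ i, o_i(t_{iq} ⊗ 1) = Σ_{r=i}^{i+m-1} t_{r φ(q)}, and o_i(1 ⊗ t_{pq}) = t_{i+p-1, i+q-1}, where φ(k) = k for k ≤ i and φ(k) = k+m−1 for k > i, is a well-defined algebra homomorphism, i.e. it preserves the defining relations [t_{ij} + t_{ik}, t_{jk}] = 0 and [t_{ij}, t_{kl}] = 0. -/

import Mathlib

noncomputable section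
open FreeLieAlgebra

def DKrels (n : ℕ) : Set (FreeLieAlgebra ℚ (Fin n × Fin n)) :=
  {x | (∃ i, x = of ℚ (i, i)) ∨
       (∃ i j, x = of ℚ (i, j) - of ℚ (j, i)) ∨
       (∃ i j k, i ≠ j ∧ i ≠ k ∧ j ≠ k ∧
          x = ⁅of ℚ (i, j) + of ℚ (i, k), of ℚ (j, k)⁆) ∨
       (∃ i j k l, ({i, j} ∩ {k, l} : Set (Fin n)) = ∅ ∧ i ≠ j ∧ k ≠ l ∧
          x = ⁅of ℚ (i, j), of ℚ (k, l)⁆)}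

def DKideal (n : ℕ) : LieIdeal ℚ (FreeLieAlgebra ℚ (Fin n × Fin n)) :=
  LieSubmodule.lieSpan ℚ _ (DKrels n)

/-- The Drinfeld–Kohno Lie algebra on `n` strands over `ℚ`. -/
def DK (n : ℕ) : Type := FreeLieAlgebra ℚ (Fin n × Fin n) ⧸ DKideal n

instance (n : ℕ) : LieRing (DK n) := by unfold DK; infer_instance
instance (n : ℕ) : LieAlgebra ℚ (DK n) := by unfold DK; infer_instance

/-- The generator `t_{ij}` of the Drinfeld–Kohno Lie algebra. -/
def tDK {n : ℕ} (i j : Fin n) : DK n :=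
  LieSubmodule.Quotient.mk' (DKideal n) (of ℚ (i, j))

open scoped TensorProduct

/-- The generator `t_{ij}` inside the universal enveloping algebra `U𝔤ₙ`
(whose completion is `A^{pb}ₙ`). -/
def tU {n : ℕ} (i j : Fin n) : UniversalEnvelopingAlgebra ℚ (DK n) :=
  UniversalEnvelopingAlgebra.ι ℚ (tDK i j)

/-!
A Lie algebra map out of `𝔤_n` is a family `t_{pq}` satisfying the Drinfeld–Kohno relations. On the
first factor `o_i` is *cabling* along the map `σ` collapsing the block `i, …, i + m` to `i`:
`t_{pq} ↦ ∑_{σ a = p, σ b = q} t_{ab}`. In a bracket of cabled chords every pair of chords on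
disjoint strands drops out and the remaining terms group into instances of the original relations,
so cabling preserves them. On the second factor `o_i` relabels strands along the inclusion of the
block, which is a fibre of `σ`; a chord inside one fibre commutes with every cabled chord by the
same grouping, so the two algebra maps commute and assemble on the tensor product.
-/

open Finset

structure DKRelations {I M : Type*} [LieRing M] (t : I → I → M) : Prop where
  self_eq_zero : ∀ a, t a a = 0
  symm : ∀ a b, t a b = t b a
  lie_add_eq_zero : ∀ a b c, a ≠ b → a ≠ c → b ≠ c → ⁅t a b + t a c, t b c⁆ = 0
  lie_eq_zero : ∀ a b c d, a ≠ c → a ≠ d → b ≠ c → b ≠ d → ⁅t a b, t c d⁆ = 0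

def chordSum {J M : Type*} [AddCommMonoid M] (t : J → J → M) (P Q : Finset J) : M :=
  ∑ a ∈ P, ∑ b ∈ Q, t a b

def cabling {I J M : Type*} [AddCommMonoid M] [Fintype J] [DecidableEq I]
    (t : J → J → M) (σ : J → I) (p q : I) : M :=
  if p = q then 0 else chordSum t {a | σ a = p} {b | σ b = q}

theorem disjoint_fiber {I J : Type*} [Fintype J] [DecidableEq I] (σ : J → I) {p q : I}
    (h : p ≠ q) :
    Disjoint ({a | σ a = p} : Finset J) ({a | σ a = q} : Finset J) :=
  disjoint_filter.2 fun _ _ hp hq => h (hp ▸ hq)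

namespace DKRelations

variable {I J M : Type*} [LieRing M] {t : J → J → M} (ht : DKRelations t)
include ht

theorem comp {e : I → J} (he : Function.Injective e) : DKRelations fun a b => t (e a) (e b) where
  self_eq_zero _ := ht.self_eq_zero _
  symm _ _ := ht.symm _ _
  lie_add_eq_zero _ _ _ hab hac hbc := ht.lie_add_eq_zero _ _ _ (he.ne hab) (he.ne hac) (he.ne hbc)
  lie_eq_zero _ _ _ _ hac had hbc hbd :=
    ht.lie_eq_zero _ _ _ _ (he.ne hac) (he.ne had) (he.ne hbc) (he.ne hbd)

theorem map {R M' : Type*} [CommRing R] [LieAlgebra R M] [LieRing M'] [LieAlgebra R M']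
    (f : M →ₗ⁅R⁆ M') : DKRelations fun a b => f (t a b) where
  self_eq_zero a := by rw [ht.self_eq_zero, map_zero]
  symm a b := by rw [ht.symm]
  lie_add_eq_zero a b c hab hac hbc := by
    rw [← map_add, ← f.map_lie, ht.lie_add_eq_zero a b c hab hac hbc, map_zero]
  lie_eq_zero a b c d hac had hbc hbd := by
    rw [← f.map_lie, ht.lie_eq_zero a b c d hac had hbc hbd, map_zero]

theorem chordSum_comm (P Q : Finset J) : chordSum t P Q = chordSum t Q P :=
  sum_comm.trans (sum_congr rfl fun b _ => sum_congr rfl fun a _ => ht.symm a b)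

theorem lie_chordSum_of_disjoint [DecidableEq J] {P Q R S : Finset J}
    (h : Disjoint (P ∪ Q) (R ∪ S)) :
    ⁅chordSum t P Q, chordSum t R S⁆ = 0 := by
  have hne := disjoint_iff_ne.1 h
  simp only [chordSum, sum_lie_sum]
  refine sum_eq_zero fun a ha => sum_eq_zero fun c hc => sum_eq_zero fun b hb =>
    sum_eq_zero fun d hd => ht.lie_eq_zero a b c d ?_ ?_ ?_ ?_ <;>
  apply hne <;> simp [*]

theorem lie_chordSum_add {P Q R : Finset J} (hPQ : Disjoint P Q)
    (hPR : Disjoint P R) (hQR : Disjoint Q R) :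
    ⁅chordSum t P Q + chordSum t P R, chordSum t Q R⁆ = 0 := by
  have key : ∀ b ∈ Q, ∀ c ∈ R, ⁅chordSum t P Q + chordSum t P R, t b c⁆ = 0 := by
    intro b hb c hc
    rw [chordSum, chordSum, ← sum_add_distrib, sum_lie]
    refine sum_eq_zero fun a ha => ?_
    have hab := disjoint_iff_ne.1 hPQ a ha b hb
    have hac := disjoint_iff_ne.1 hPR a ha c hc
    have hbc := disjoint_iff_ne.1 hQR b hb c hc
    -- only the chords `t a b` and `t a c` fail to commute with `t b c`
    rw [add_lie, sum_lie, sum_lie, sum_eq_single_of_mem b hb, sum_eq_single_of_mem c hc, ← add_lie]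
    · exact ht.lie_add_eq_zero a b c hab hac hbc
    · exact fun c' hc' hc'c =>
        ht.lie_eq_zero a c' b c hab hac (disjoint_iff_ne.1 hQR b hb c' hc').symm hc'c
    · exact fun b' hb' hb'b =>
        ht.lie_eq_zero a b' b c hab hac hb'b (disjoint_iff_ne.1 hQR b' hb' c hc)
  simp only [chordSum, lie_sum] at key ⊢
  exact sum_eq_zero fun b hb => sum_eq_zero fun c hc => key b hb c hc

theorem lie_chordSum_of_mem [DecidableEq J] {P Q : Finset J} (hPQ : Disjoint P Q) {a b : J}
    (ha : a ∈ P) (hb : b ∈ P) : ⁅chordSum t P Q, t a b⁆ = 0 := by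
  obtain rfl | hab := eq_or_ne a b
  · rw [ht.self_eq_zero, lie_zero]
  rw [chordSum, sum_comm, sum_lie]
  refine sum_eq_zero fun d hd => ?_
  have had := disjoint_iff_ne.1 hPQ a ha d hd
  have hbd := disjoint_iff_ne.1 hPQ b hb d hd
  rw [sum_lie, ← sum_subset (insert_subset ha (singleton_subset_iff.2 hb)), sum_pair hab,
    ← add_lie, ht.symm a d, ht.symm b d]
  · exact ht.lie_add_eq_zero d a b had.symm hbd.symm hab
  · intro c _ hc
    simp only [mem_insert, mem_singleton, not_or] at hc
    exact ht.lie_eq_zero c d a b hc.1 hc.2 had.symm hbd.symm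

section Cabling

variable [Fintype J] [DecidableEq I] [DecidableEq J]

theorem lie_cabling_eq_zero {σ : J → I} {a b : J} (hab : σ a = σ b) (p q : I) :
    ⁅cabling t σ p q, t a b⁆ = 0 := by
  rw [_root_.cabling]
  split_ifs with hpq
  · exact zero_lie _
  by_cases hp : σ a = p
  · exact ht.lie_chordSum_of_mem (disjoint_fiber σ hpq) (by simpa) (by simpa [← hab])
  by_cases hq : σ a = q
  · rw [ht.chordSum_comm]
    exact ht.lie_chordSum_of_mem (disjoint_fiber σ (Ne.symm hpq)) (by simpa) (by simpa [← hab])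
  have hchord : t a b = chordSum t {a} {b} := by simp [chordSum]
  rw [hchord]
  refine ht.lie_chordSum_of_disjoint (disjoint_left.2 fun c hc => ?_)
  simp only [mem_union, mem_filter, mem_univ, true_and, mem_singleton] at hc ⊢
  rintro (rfl | rfl) <;> grind

theorem cabling (σ : J → I) : DKRelations (cabling t σ) where
  self_eq_zero _ := if_pos rfl
  symm p q := by
    by_cases hpq : p = q
    · rw [hpq]
    · rw [_root_.cabling, _root_.cabling, if_neg hpq, if_neg (Ne.symm hpq), ht.chordSum_comm]
  lie_add_eq_zero p q r hpq hpr hqr := by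
    rw [_root_.cabling, _root_.cabling, _root_.cabling, if_neg hpq, if_neg hpr, if_neg hqr]
    exact ht.lie_chordSum_add (disjoint_fiber σ hpq) (disjoint_fiber σ hpr) (disjoint_fiber σ hqr)
  lie_eq_zero p q r s hpr hps hqr hqs := by
    rw [_root_.cabling, _root_.cabling]
    split_ifs with hpq hrs
    · exact zero_lie _
    · exact zero_lie _
    · exact lie_zero _
    · exact ht.lie_chordSum_of_disjoint <| disjoint_union_left.2
        ⟨disjoint_union_right.2 ⟨disjoint_fiber σ hpr, disjoint_fiber σ hps⟩,
          disjoint_union_right.2 ⟨disjoint_fiber σ hqr, disjoint_fiber σ hqs⟩⟩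

end Cabling

end DKRelations

theorem ne_of_pair_inter_pair_eq_empty {α : Type*} {a b c d : α}
    (h : ({a, b} ∩ {c, d} : Set α) = ∅) :
    a ≠ c ∧ a ≠ d ∧ b ≠ c ∧ b ≠ d := by
  simp only [Set.eq_empty_iff_forall_notMem, Set.mem_inter_iff, Set.mem_insert_iff,
    Set.mem_singleton_iff] at h
  refine ⟨?_, ?_, ?_, ?_⟩ <;> rintro rfl <;> simp_all

namespace DK

variable {n : ℕ}

def mk (n : ℕ) : FreeLieAlgebra ℚ (Fin n × Fin n) →ₗ⁅ℚ⁆ DK n where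
  toLinearMap := (LieSubmodule.Quotient.mk' (DKideal n)).toLinearMap
  map_lie' := rfl

theorem mk_of (a b : Fin n) : mk n (of ℚ (a, b)) = tDK a b := rfl

theorem mk_surjective : Function.Surjective (mk n) :=
  LieSubmodule.Quotient.surjective_mk' _

theorem mk_eq_zero_of_mem {x : FreeLieAlgebra ℚ (Fin n × Fin n)} (hx : x ∈ DKrels n) :
    mk n x = 0 :=
  (LieSubmodule.Quotient.mk_eq_zero _).2 (LieSubmodule.subset_lieSpan hx)

theorem dkRelations_tDK : DKRelations (tDK (n := n)) where
  self_eq_zero a := mk_eq_zero_of_mem (Or.inl ⟨a, rfl⟩)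
  symm a b := by
    rw [← sub_eq_zero, ← mk_of, ← mk_of, ← map_sub]
    exact mk_eq_zero_of_mem (Or.inr (Or.inl ⟨a, b, rfl⟩))
  lie_add_eq_zero a b c hab hac hbc := by
    rw [← mk_of, ← mk_of, ← mk_of, ← map_add, ← LieHom.map_lie]
    exact mk_eq_zero_of_mem (Or.inr (Or.inr (Or.inl ⟨a, b, c, hab, hac, hbc, rfl⟩)))
  lie_eq_zero a b c d hac had hbc hbd := by
    obtain rfl | hab := eq_or_ne a b
    · rw [← mk_of, mk_eq_zero_of_mem (Or.inl ⟨a, rfl⟩), zero_lie]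
    obtain rfl | hcd := eq_or_ne c d
    · rw [← mk_of c, mk_eq_zero_of_mem (Or.inl ⟨c, rfl⟩), lie_zero]
    have h : ({a, b} ∩ {c, d} : Set (Fin n)) = ∅ := by
      ext x
      simp only [Set.mem_inter_iff, Set.mem_insert_iff, Set.mem_singleton_iff,
        Set.mem_empty_iff_false, iff_false]
      grind
    rw [← mk_of, ← mk_of, ← LieHom.map_lie]
    exact mk_eq_zero_of_mem (Or.inr (Or.inr (Or.inr ⟨a, b, c, d, h, hab, hcd, rfl⟩)))

variable {M : Type*} [LieRing M] [LieAlgebra ℚ M]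

theorem DKideal_le_ker_lift {t : Fin n → Fin n → M} (ht : DKRelations t) :
    DKideal n ≤ (FreeLieAlgebra.lift ℚ (Function.uncurry t)).ker := by
  refine LieSubmodule.lieSpan_le.2 fun x hx => LieHom.mem_ker.2 ?_
  rcases hx with ⟨a, rfl⟩ | ⟨a, b, rfl⟩ | ⟨a, b, c, hab, hac, hbc, rfl⟩ | ⟨a, b, c, d, h, -, -, rfl⟩
    <;> simp only [LieHom.map_lie, map_add, map_sub, lift_of_apply, Function.uncurry_apply_pair]
  · exact ht.self_eq_zero a
  · exact sub_eq_zero.2 (ht.symm a b)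
  · exact ht.lie_add_eq_zero a b c hab hac hbc
  · obtain ⟨hac, had, hbc, hbd⟩ := ne_of_pair_inter_pair_eq_empty h
    exact ht.lie_eq_zero a b c d hac had hbc hbd

def lift (t : Fin n → Fin n → M) (ht : DKRelations t) : DK n →ₗ⁅ℚ⁆ M where
  toLinearMap := (DKideal n).toSubmodule.liftQ (FreeLieAlgebra.lift ℚ (Function.uncurry t))
    fun x hx => LinearMap.mem_ker.2 (LieHom.mem_ker.1 (DKideal_le_ker_lift ht hx))
  map_lie' {x y} := by
    obtain ⟨x, rfl⟩ := mk_surjective x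
    obtain ⟨y, rfl⟩ := mk_surjective y
    exact (FreeLieAlgebra.lift ℚ (Function.uncurry t)).map_lie x y

theorem lift_tDK {t : Fin n → Fin n → M} (ht : DKRelations t) (a b : Fin n) :
    lift t ht (tDK a b) = t a b :=
  lift_of_apply (Function.uncurry t) (a, b)

end DK

theorem FreeLieAlgebra.lieSpan_range_of {R X : Type*} [CommRing R] :
    LieSubalgebra.lieSpan R (FreeLieAlgebra R X) (Set.range (of R)) = ⊤ := by
  set K := LieSubalgebra.lieSpan R (FreeLieAlgebra R X) (Set.range (of R))
  let j : FreeLieAlgebra R X →ₗ⁅R⁆ K :=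
    FreeLieAlgebra.lift R fun x => ⟨of R x, LieSubalgebra.subset_lieSpan ⟨x, rfl⟩⟩
  have hj : K.incl.comp j = LieHom.id := hom_ext fun x => by simp [j]
  refine eq_top_iff.2 fun x _ => ?_
  rw [← LieHom.id_apply (R := R) x, ← hj]
  exact (j x).2

theorem UniversalEnvelopingAlgebra.adjoin_range_ι {R L : Type*} [CommRing R] [LieRing L]
    [LieAlgebra R L] : Algebra.adjoin R (Set.range (ι R (L := L))) = ⊤ := by
  have hι : (ι R : L → UniversalEnvelopingAlgebra R L) = mkAlgHom R L ∘ TensorAlgebra.ι R := by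
    ext; simp
  rw [hι, Set.range_comp, Algebra.adjoin_image, TensorAlgebra.adjoin_range_ι, Algebra.map_top,
    AlgHom.range_eq_top]
  exact RingCon.mkₐ_surjective _

theorem commute_of_adjoin_eq_top {R A B C : Type*} [CommSemiring R] [Semiring A] [Semiring B]
    [Semiring C] [Algebra R A] [Algebra R B] [Algebra R C] (F : B →ₐ[R] A) (G : C →ₐ[R] A)
    {s : Set B} {u : Set C} (hs : Algebra.adjoin R s = ⊤) (hu : Algebra.adjoin R u = ⊤)
    (h : ∀ b ∈ s, ∀ c ∈ u, Commute (F b) (G c)) (x : B) (y : C) : Commute (F x) (G y) := by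
  have hx : F x ∈ Algebra.adjoin R (F '' s) := by
    rw [Algebra.adjoin_image, hs]; exact ⟨x, trivial, rfl⟩
  have hy : G y ∈ Algebra.adjoin R (G '' u) := by
    rw [Algebra.adjoin_image, hu]; exact ⟨y, trivial, rfl⟩
  refine Algebra.commute_of_mem_adjoin_of_forall_mem_commute hy ?_
  rintro _ ⟨c, hc, rfl⟩
  refine (Algebra.commute_of_mem_adjoin_of_forall_mem_commute hx ?_).symm
  rintro _ ⟨b, hb, rfl⟩
  exact (h b hb c hc).symm

section UniversalEnveloping

attribute [local instance] LieRing.ofAssociativeRing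

theorem dkRelations_tU {n : ℕ} : DKRelations (tU (n := n)) :=
  DK.dkRelations_tDK.map (UniversalEnvelopingAlgebra.ι ℚ)

theorem DK.adjoin_range_tU {n : ℕ} :
    Algebra.adjoin ℚ (Set.range (Function.uncurry (tU (n := n)))) = ⊤ := by
  set S := Algebra.adjoin ℚ (Set.range (Function.uncurry (tU (n := n))))
  let K := (lieSubalgebraOfSubalgebra ℚ _ S).comap ((UniversalEnvelopingAlgebra.ι ℚ).comp (mk n))
  have hK : LieSubalgebra.lieSpan ℚ _ (Set.range (of ℚ)) ≤ K :=
    LieSubalgebra.lieSpan_le.2 <| Set.range_subset_iff.2 fun ab => Algebra.subset_adjoin ⟨ab, rfl⟩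
  rw [FreeLieAlgebra.lieSpan_range_of] at hK
  rw [eq_top_iff, ← UniversalEnvelopingAlgebra.adjoin_range_ι, Algebra.adjoin_le_iff]
  rintro _ ⟨x, rfl⟩
  obtain ⟨x, rfl⟩ := mk_surjective x
  exact hK trivial

namespace Insertion

variable (n m : ℕ) (i : Fin (n + 1))

def shift (k : Fin (n + 1)) : Fin (n + m + 1) :=
  if (k : ℕ) ≤ (i : ℕ) then ⟨k, Nat.lt_succ_of_le (by omega)⟩
  else ⟨(k : ℕ) + m, Nat.lt_succ_of_le (by omega)⟩

def block : Fin (m + 1) ↪ Fin (n + m + 1) :=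
  ⟨fun r => ⟨(i : ℕ) + r, Nat.lt_succ_of_le (by omega)⟩,
    fun r s h => by simpa [Fin.ext_iff] using h⟩

@[simp]
theorem val_block (r : Fin (m + 1)) : (block n m i r : ℕ) = i + r := rfl

-- `k - min (k - i) m` is `k` for `k ≤ i`, `i` on the block and `k - m` beyond it
def collapse (k : Fin (n + m + 1)) : Fin (n + 1) :=
  ⟨(k : ℕ) - min ((k : ℕ) - i) m, by omega⟩

theorem collapse_block (r : Fin (m + 1)) : collapse n m i (block n m i r) = i :=
  Fin.ext <| by simp only [collapse, val_block]; omega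

theorem filter_collapse_eq_of_ne {p : Fin (n + 1)} (hp : p ≠ i) :
    ({k | collapse n m i k = p} : Finset _) = {shift n m i p} := by
  ext k
  have := Fin.val_ne_of_ne hp
  simp only [Finset.mem_filter, Finset.mem_univ, true_and, Finset.mem_singleton, collapse, shift,
    Fin.ext_iff]
  split_ifs <;> simp only <;> omega

theorem filter_collapse_eq_self :
    ({k | collapse n m i k = i} : Finset _) = Finset.univ.map (block n m i) := by
  ext k
  simp only [Finset.mem_filter, Finset.mem_univ, true_and, Finset.mem_map]
  constructor
  · intro h
    have h' := Fin.val_eq_of_eq h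
    simp only [collapse] at h'
    exact ⟨⟨k - i, by omega⟩, Fin.ext <| by simp only [val_block]; omega⟩
  · rintro ⟨r, rfl⟩
    exact collapse_block n m i r

variable {n m i} {M : Type*} [AddCommMonoid M] (t : Fin (n + m + 1) → Fin (n + m + 1) → M)

theorem cabling_collapse_of_ne {p q : Fin (n + 1)} (hpq : p ≠ q) (hp : p ≠ i) (hq : q ≠ i) :
    cabling t (collapse n m i) p q = t (shift n m i p) (shift n m i q) := by
  rw [cabling, if_neg hpq, filter_collapse_eq_of_ne n m i hp, filter_collapse_eq_of_ne n m i hq]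
  simp [chordSum]

theorem cabling_collapse_self_left {q : Fin (n + 1)} (hq : q ≠ i) :
    cabling t (collapse n m i) i q = ∑ r, t (block n m i r) (shift n m i q) := by
  rw [cabling, if_neg (Ne.symm hq), filter_collapse_eq_self, filter_collapse_eq_of_ne n m i hq]
  simp [chordSum]

variable (n m i)

def leftHom :
    UniversalEnvelopingAlgebra ℚ (DK (n + 1)) →ₐ[ℚ] UniversalEnvelopingAlgebra ℚ (DK (n + m + 1)) :=
  UniversalEnvelopingAlgebra.lift ℚ <| DK.lift _ (dkRelations_tU.cabling (collapse n m i))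

def rightHom :
    UniversalEnvelopingAlgebra ℚ (DK (m + 1)) →ₐ[ℚ] UniversalEnvelopingAlgebra ℚ (DK (n + m + 1)) :=
  UniversalEnvelopingAlgebra.lift ℚ <| DK.lift _ (dkRelations_tU.comp (block n m i).injective)

theorem leftHom_tU (p q : Fin (n + 1)) :
    leftHom n m i (tU p q) = cabling tU (collapse n m i) p q := by
  rw [leftHom, tU, UniversalEnvelopingAlgebra.lift_ι_apply, DK.lift_tDK]

theorem rightHom_tU (p q : Fin (m + 1)) :
    rightHom n m i (tU p q) = tU (block n m i p) (block n m i q) := by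
  rw [rightHom, tU, UniversalEnvelopingAlgebra.lift_ι_apply, DK.lift_tDK]

theorem commute_leftHom_rightHom (x : UniversalEnvelopingAlgebra ℚ (DK (n + 1)))
    (y : UniversalEnvelopingAlgebra ℚ (DK (m + 1))) :
    Commute (leftHom n m i x) (rightHom n m i y) := by
  refine commute_of_adjoin_eq_top _ _ DK.adjoin_range_tU DK.adjoin_range_tU ?_ x y
  rintro _ ⟨⟨p, q⟩, rfl⟩ _ ⟨⟨a, b⟩, rfl⟩
  rw [Function.uncurry_apply_pair, Function.uncurry_apply_pair, leftHom_tU,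
    rightHom_tU, commute_iff_lie_eq]
  exact dkRelations_tU.lie_cabling_eq_zero ((collapse_block n m i a).trans
    (collapse_block n m i b).symm) p q

end Insertion

end UniversalEnveloping

/-- the operadic insertion at the `i`-th position is a
well-defined algebra homomorphism
`o_i : A^{pb}_{n+1} ⊗ A^{pb}_{m+1} → A^{pb}_{n+m+1}` determined on the
generators by the displayed formulas (it suffices to treat the universal
enveloping algebras `U𝔤` of the Drinfeld–Kohno Lie algebras): with
`φ(k) = k` for `k ≤ i` and `φ(k) = k + m` for `k > i`, there exists an
algebra homomorphism `f` with
`f(t_{pq} ⊗ 1) = t_{φ(p)φ(q)}` for `p, q ≠ i`,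
`f(t_{iq} ⊗ 1) = Σ_{r=i}^{i+m} t_{r,φ(q)}` for `q ≠ i`, and
`f(1 ⊗ t_{pq}) = t_{i+p, i+q}`. -/
theorem insertion_well_defined (n m : ℕ) (i : Fin (n + 1)) :
    letI φ : Fin (n + 1) → Fin (n + m + 1) := fun k =>
      if (k : ℕ) ≤ (i : ℕ) then ⟨k, by omega⟩ else ⟨(k : ℕ) + m, by omega⟩
    ∃ f : (UniversalEnvelopingAlgebra ℚ (DK (n + 1)) ⊗[ℚ]
            UniversalEnvelopingAlgebra ℚ (DK (m + 1))) →ₐ[ℚ]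
          UniversalEnvelopingAlgebra ℚ (DK (n + m + 1)),
      (∀ p q : Fin (n + 1), p ≠ q → p ≠ i → q ≠ i →
        f (tU p q ⊗ₜ 1) = tU (φ p) (φ q)) ∧
      (∀ q : Fin (n + 1), q ≠ i →
        f (tU i q ⊗ₜ 1) =
          ∑ r : Fin (m + 1), tU ⟨(i : ℕ) + (r : ℕ), by omega⟩ (φ q)) ∧
      (∀ p q : Fin (m + 1),
        f (1 ⊗ₜ tU p q) =
          tU ⟨(i : ℕ) + (p : ℕ), by omega⟩ ⟨(i : ℕ) + (q : ℕ), by omega⟩) := by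
  refine ⟨Algebra.TensorProduct.lift _ _ (Insertion.commute_leftHom_rightHom n m i),
    fun p q hpq hp hq => ?_, fun q hq => ?_, fun p q => ?_⟩ <;>
  simp only [Algebra.TensorProduct.lift_tmul, map_one, mul_one, one_mul]
  · exact (Insertion.leftHom_tU n m i p q).trans (Insertion.cabling_collapse_of_ne _ hpq hp hq)
  · exact (Insertion.leftHom_tU n m i i q).trans (Insertion.cabling_collapse_self_left _ hq)
  · exact Insertion.rightHom_tU n m i p q
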